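/- arXiv:2203.07419 — 2 statements merged into one kernel-verified Lean document; each statement's English description precedes it below -/
import Mathlib

section
/- Every 2-torsion-free semiprime Lie solvable ring is commutative. -/
/-!
Every term `δₖR` of the Lie derived series is a Lie ideal, so it suffices to show, by downward
induction from `δₙR = 0`, that `δₖR` is central as soon as `δₖ₊₁R` is. For `u ∈ δₖR` the element
`c = [u, [u, r]]` lies in `δₖ₊₁R`, hence is central, and so is `c * u = [u, [u, r * u]]`; this forces
`c * [u, a] = 0` for all `a`, in particular `c² = 0`, and semiprimeness gives `c = 0`. Finally, in a
2-torsion-free semiprime ring an inner derivation `d = [u, ·]` with `d² = 0` vanishes: the Leibniz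
rule gives `2 d(r) d(s) = 0`, hence `d(r) s d(r) = 0` for all `s`.
-/

/-- The Lie derived series of a (possibly non-unital) ring:
`lieDelta R 0 = R`, and `lieDelta R (n+1)` is the additive subgroup generated by
all `[a, b] = a*b - b*a` with `a, b ∈ lieDelta R n`. -/
def lieDelta (R : Type*) [NonUnitalRing R] : ℕ → AddSubgroup R
  | 0 => ⊤
  | n + 1 => AddSubgroup.closure
      {z : R | ∃ a ∈ lieDelta R n, ∃ b ∈ lieDelta R n, z = a * b - b * a}

/-- A ring is Lie solvable if `δ_n R = 0` for some `n`. -/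
def IsLieSolvableRing (R : Type*) [NonUnitalRing R] : Prop := ∃ n : ℕ, lieDelta R n = ⊥

open Ring (lie_def)

section
variable {R : Type*} [NonUnitalRing R]

theorem lie_mem_lieDelta_succ {k : ℕ} {a b : R} (ha : a ∈ lieDelta R k)
    (hb : b ∈ lieDelta R k) : ⁅a, b⁆ ∈ lieDelta R (k + 1) :=
  AddSubgroup.subset_closure ⟨a, ha, b, hb, rfl⟩

theorem lie_mem_lieDelta {k : ℕ} {a : R} (ha : a ∈ lieDelta R k) (r : R) :
    ⁅a, r⁆ ∈ lieDelta R k := by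
  induction k generalizing a with
  | zero => trivial
  | succ k ih =>
    let adRight : R →+ R := AddMonoidHom.mulRight r - AddMonoidHom.mulLeft r
    suffices lieDelta R (k + 1) ≤ (lieDelta R (k + 1)).comap adRight from this ha
    refine (AddSubgroup.closure_le _).mpr ?_
    rintro _ ⟨a, ha, b, hb, rfl⟩
    have jacobi : ⁅⁅a, b⁆, r⁆ = ⁅⁅a, r⁆, b⁆ + ⁅a, ⁅b, r⁆⁆ := by
      simp only [lie_def]; noncomm_ring
    change ⁅⁅a, b⁆, r⁆ ∈ lieDelta R (k + 1)
    rw [jacobi]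
    exact add_mem (lie_mem_lieDelta_succ (ih ha) hb) (lie_mem_lieDelta_succ ha (ih hb))

theorem commute_of_lie_lie_eq_zero (h2 : ∀ x : R, 2 • x = 0 → x = 0)
    (hsemi : ∀ a : R, (∀ r : R, a * r * a = 0) → a = 0) {u : R}
    (hu : ∀ r : R, ⁅u, ⁅u, r⁆⁆ = 0) (r : R) : Commute u r := by
  have hprod : ∀ r s : R, ⁅u, r⁆ * ⁅u, s⁆ = 0 := fun r s => h2 _ <|
    calc 2 • (⁅u, r⁆ * ⁅u, s⁆) = ⁅u, ⁅u, r * s⁆⁆ - ⁅u, ⁅u, r⁆⁆ * s - r * ⁅u, ⁅u, s⁆⁆ := by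
          simp only [lie_def]; noncomm_ring
      _ = 0 := by simp only [hu, zero_mul, mul_zero, sub_zero]
  refine commute_iff_lie_eq.mpr (hsemi _ fun s => ?_)
  calc ⁅u, r⁆ * s * ⁅u, r⁆ = ⁅u, r * s⁆ * ⁅u, r⁆ - r * (⁅u, s⁆ * ⁅u, r⁆) := by
        simp only [lie_def]; noncomm_ring
    _ = 0 := by rw [hprod, hprod, mul_zero, sub_zero]

theorem commute_of_lie_lie_commute (h2 : ∀ x : R, 2 • x = 0 → x = 0)
    (hsemi : ∀ a : R, (∀ r : R, a * r * a = 0) → a = 0) {u : R}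
    (hu : ∀ r s : R, Commute ⁅u, ⁅u, r⁆⁆ s) (r : R) : Commute u r := by
  refine commute_of_lie_lie_eq_zero h2 hsemi (fun r => hsemi _ fun s => ?_) r
  set c := ⁅u, ⁅u, r⁆⁆
  have hcu : ∀ s, Commute (c * u) s := by
    have : c * u = ⁅u, ⁅u, r * u⁆⁆ := by simp only [c, lie_def]; noncomm_ring
    exact this ▸ hu (r * u)
  have hc_lie : ∀ a, c * ⁅u, a⁆ = 0 := fun a =>
    calc c * ⁅u, a⁆ = c * u * a - c * a * u := by simp only [lie_def]; noncomm_ring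
      _ = a * (c * u) - a * c * u := by rw [(hcu a).eq, (hu r a).eq]
      _ = 0 := by rw [mul_assoc, sub_self]
  calc c * s * c = s * (c * c) := by rw [(hu r s).eq, mul_assoc]
    _ = 0 := by rw [hc_lie, mul_zero]

theorem commute_of_mem_lieDelta (h2 : ∀ x : R, 2 • x = 0 → x = 0)
    (hsemi : ∀ a : R, (∀ r : R, a * r * a = 0) → a = 0) {k : ℕ}
    (hcentral : ∀ x ∈ lieDelta R (k + 1), ∀ r : R, Commute x r) {u : R}
    (hu : u ∈ lieDelta R k) (r : R) : Commute u r :=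
  commute_of_lie_lie_commute h2 hsemi
    (fun r => hcentral _ (lie_mem_lieDelta_succ hu (lie_mem_lieDelta hu r))) r

end

/-- Every 2-torsion-free semiprime Lie solvable ring is commutative. -/
theorem stmt2 (R : Type*) [NonUnitalRing R]
    (h2 : ∀ x : R, 2 • x = 0 → x = 0)
    (hsemi : ∀ a : R, (∀ r : R, a * r * a = 0) → a = 0)
    (hsol : IsLieSolvableRing R) :
    ∀ x y : R, x * y = y * x := by
  obtain ⟨n, hn⟩ := hsol
  have hcentral : ∀ k ≤ n, ∀ x ∈ lieDelta R k, ∀ r : R, Commute x r := by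
    intro k hk
    induction hk using Nat.decreasingInduction with
    | self =>
      intro x hx r
      rw [hn, AddSubgroup.mem_bot] at hx
      exact hx ▸ Commute.zero_left r
    | of_succ k _ ih => exact fun x hx => commute_of_mem_lieDelta h2 hsemi ih hx
  exact fun x => hcentral 0 n.zero_le x (AddSubgroup.mem_top x)
end

section
/- Let R be a unital domain of prime characteristic p > 0 whose unit group U(R) is torsion (every unit has finite order). Then: (a) no unit of R has order divisible by p (U(R) is a p'-group); (b) for every proper left or right ideal I of R, if x ∈ I and 1 + x is a unit, then x = 0; in particular the Jacobson radical J(R) is zero; and (c) every nonzero x ∈ R such that 1 + x is a unit is itself a unit. -/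
section aux

variable {R : Type*} [Ring R] [IsDomain R] {p : ℕ}

lemma aux_parta (hp : p.Prime) [CharP R p]
    (htor : ∀ u : Rˣ, IsOfFinOrder u) : ∀ u : Rˣ, ¬ p ∣ orderOf u := by
  haveI : Fact p.Prime := ⟨hp⟩
  intro u hdvd
  have hn : 0 < orderOf u := (htor u).orderOf_pos
  set v : Rˣ := u ^ (orderOf u / p) with hv
  have hvp : v ^ p = 1 := by
    rw [hv, ← pow_mul, Nat.div_mul_cancel hdvd, pow_orderOf_eq_one]
  have hv1 : v = 1 := by
    have hcomm : Commute ((v : R)) (1 : R) := Commute.one_right _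
    have h0 : ((v : R) - 1) ^ p = 0 := by
      rw [sub_pow_expChar_of_commute p hcomm, one_pow]
      have : ((v ^ p : Rˣ) : R) = 1 := by rw [hvp]; rfl
      rw [Units.val_pow_eq_pow_val] at this
      rw [this, sub_self]
    have := pow_eq_zero_iff hp.ne_zero |>.mp h0
    ext
    simpa [sub_eq_zero] using this
  have : orderOf u ∣ orderOf u / p := orderOf_dvd_of_pow_eq_one (by rw [← hv, hv1])
  have hlt : orderOf u / p < orderOf u :=
    Nat.div_lt_self hn hp.one_lt
  have hpos : 0 < orderOf u / p := Nat.div_pos (Nat.le_of_dvd hn hdvd) hp.pos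
  exact absurd (Nat.le_of_dvd hpos this) (not_le.mpr hlt)

lemma aux_cast_unit (hp : p.Prime) [CharP R p] {n : ℕ} (hn : ¬ p ∣ n) :
    IsUnit ((n : R)) := by
  haveI : Fact p.Prime := ⟨hp⟩
  have h1 : ((n : ZMod p)) ≠ 0 := by
    simpa [ZMod.natCast_eq_zero_iff] using hn
  have h2 : IsUnit ((n : ZMod p)) := isUnit_iff_ne_zero.mpr h1
  have := h2.map (ZMod.castHom (dvd_refl p) R)
  simpa using this

lemma aux_partc (hp : p.Prime) [CharP R p]
    (htor : ∀ u : Rˣ, IsOfFinOrder u) :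
    ∀ x : R, x ≠ 0 → IsUnit (1 + x) → IsUnit x := by
  intro x hx hu
  obtain ⟨u, hu⟩ := hu
  set n := orderOf u with hnn
  have hn0 : 0 < n := (htor u).orderOf_pos
  have hpu : ¬ p ∣ n := aux_parta hp htor u
  have hun : (1 + x) ^ n = 1 := by
    rw [← hu, ← Units.val_pow_eq_pow_val, pow_orderOf_eq_one, Units.val_one]
  -- geometric sum
  have h1 : (∑ i ∈ Finset.range n, (1 + x) ^ i) * x = 0 := by
    have := geom_sum_mul (1 + x) n
    simpa [hun] using this
  have hS : (∑ i ∈ Finset.range n, (1 + x) ^ i) = 0 := by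
    rcases mul_eq_zero.mp h1 with h | h
    · exact h
    · exact absurd h hx
  have h2 : ∀ i : ℕ, (1 + x) ^ i = 1 + (∑ j ∈ Finset.range i, (1 + x) ^ j) * x := by
    intro i
    have := geom_sum_mul (1 + x) i
    simp only [add_sub_cancel_left] at this
    rw [this]; abel
  have h3 : (∑ i ∈ Finset.range n, (1 + x) ^ i)
      = (n : R) + (∑ i ∈ Finset.range n, ∑ j ∈ Finset.range i, (1 + x) ^ j) * x := by
    rw [Finset.sum_congr rfl (fun i _ => h2 i), Finset.sum_add_distrib]
    simp [Finset.sum_mul]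
  set T := ∑ i ∈ Finset.range n, ∑ j ∈ Finset.range i, (1 + x) ^ j with hT
  have h4 : T * x = -(n : R) := by
    have h := h3.symm.trans hS
    exact eq_neg_of_add_eq_zero_right h
  obtain ⟨w, hw⟩ := aux_cast_unit (R := R) hp hpu
  have hc : (-(↑w⁻¹ : R) * T) * x = 1 := by
    rw [mul_assoc, h4, ← hw, neg_mul_neg, Units.inv_mul]
  set c := -(↑w⁻¹ : R) * T with hcdef
  have hc0 : c ≠ 0 := by
    intro h
    rw [h, zero_mul] at hc
    exact one_ne_zero hc.symm
  have hxc : x * c = 1 := by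
    have h5 : c * (x * c - 1) = 0 := by
      rw [mul_sub, ← mul_assoc, hc, one_mul, mul_one, sub_self]
    rcases mul_eq_zero.mp h5 with h | h
    · exact absurd h hc0
    · exact sub_eq_zero.mp h
  exact ⟨⟨x, c, hxc, hc⟩, rfl⟩

end aux

/-- Let `R` be a unital domain of prime characteristic `p > 0` whose unit group is
torsion. Then:
(a) no unit of `R` has order divisible by `p`;
(b) for every proper left or right ideal `I` of `R` (given here as a set containing `0`,
closed under addition, and closed under multiplication by arbitrary ring elements on the
left or on the right), if `x ∈ I` and `1 + x` is a unit then `x = 0`; in particular the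
Jacobson radical (the intersection of the maximal left ideals) is zero;
(c) every nonzero `x ∈ R` such that `1 + x` is a unit is itself a unit. -/
theorem stmt9 (R : Type*) [Ring R] [IsDomain R] (p : ℕ) (hp : p.Prime) [CharP R p]
    (htor : ∀ u : Rˣ, IsOfFinOrder u) :
    (∀ u : Rˣ, ¬ p ∣ orderOf u) ∧
    (∀ I : Set R, (0 : R) ∈ I →
      (∀ a ∈ I, ∀ b ∈ I, a + b ∈ I) →
      ((∀ r : R, ∀ a ∈ I, r * a ∈ I) ∨ (∀ r : R, ∀ a ∈ I, a * r ∈ I)) →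
      I ≠ Set.univ → ∀ x ∈ I, IsUnit (1 + x) → x = 0) ∧
    sInf {I : Ideal R | I.IsMaximal} = ⊥ ∧
    (∀ x : R, x ≠ 0 → IsUnit (1 + x) → IsUnit x) := by
  have partc := aux_partc hp htor
  have partb : ∀ I : Set R, (0 : R) ∈ I →
      (∀ a ∈ I, ∀ b ∈ I, a + b ∈ I) →
      ((∀ r : R, ∀ a ∈ I, r * a ∈ I) ∨ (∀ r : R, ∀ a ∈ I, a * r ∈ I)) →
      I ≠ Set.univ → ∀ x ∈ I, IsUnit (1 + x) → x = 0 := by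
    intro I h0 hadd hmul hne x hxI hux
    by_contra hx0
    obtain ⟨v, hv⟩ := partc x hx0 hux
    apply hne
    apply Set.eq_univ_of_forall
    intro r
    rcases hmul with hL | hR
    · have h1 : (1 : R) ∈ I := by
        have := hL (↑v⁻¹) x hxI
        rwa [← hv, Units.inv_mul] at this
      have := hL r 1 h1
      simpa using this
    · have h1 : (1 : R) ∈ I := by
        have := hR (↑v⁻¹) x hxI
        rwa [← hv, Units.mul_inv] at this
      have := hR r 1 h1
      simpa using this
  refine ⟨aux_parta hp htor, partb, ?_, partc⟩
  -- Jacobson radical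
  set J : Ideal R := sInf {I : Ideal R | I.IsMaximal} with hJ
  have hmemJ : ∀ y : R, y ∈ J ↔ ∀ M : Ideal R, M.IsMaximal → y ∈ M := by
    intro y
    simp [hJ, Submodule.mem_sInf]
  have hli : ∀ y ∈ J, ∃ c : R, c * (1 + y) = 1 := by
    intro y hy
    by_contra hno
    push_neg at hno
    have hspan : Ideal.span {(1 + y)} ≠ ⊤ := by
      intro htop
      have h1 : (1 : R) ∈ Ideal.span {(1 + y)} := htop ▸ Submodule.mem_top
      rw [Ideal.mem_span_singleton'] at h1
      obtain ⟨c, hc⟩ := h1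
      exact hno c hc
    obtain ⟨M, hM, hle⟩ := Ideal.exists_le_maximal _ hspan
    have h1 : (1 + y) ∈ M := hle (Ideal.subset_span rfl)
    have h2 : y ∈ M := (hmemJ y).mp hy M hM
    have : (1 : R) ∈ M := by
      have := M.sub_mem h1 h2
      simpa using this
    exact hM.ne_top (Ideal.eq_top_of_isUnit_mem _ this isUnit_one)
  -- J = ⊥
  rw [eq_bot_iff]
  intro x hx
  rw [Ideal.mem_bot]
  obtain ⟨c, hc⟩ := hli x hx
  have hcx : -(c * x) ∈ J := J.neg_mem (J.smul_mem c hx)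
  obtain ⟨d, hd⟩ := hli _ hcx
  have hdc : d * c = 1 := by
    have hc2 : c + c * x = 1 := by rw [← hc, mul_add, mul_one]
    have hceq : (1 : R) + -(c * x) = c := by
      rw [← hc2]; abel
    rwa [hceq] at hd
  have hcu : IsUnit (1 + x) := by
    have hval : (1 + x) * c = 1 := by
      have : (1 + x) = d := by
        calc (1 + x) = 1 * (1 + x) := (one_mul _).symm
        _ = (d * c) * (1 + x) := by rw [hdc]
        _ = d * (c * (1 + x)) := by rw [mul_assoc]
        _ = d := by rw [hc, mul_one]
      rw [this, hdc]
    exact ⟨⟨1 + x, c, hval, hc⟩, rfl⟩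
  by_contra hx0
  obtain ⟨M, hM⟩ := Ideal.exists_maximal R
  obtain ⟨v, hv⟩ := partc x hx0 hcu
  have hxM : x ∈ M := (hmemJ x).mp hx M hM
  exact hM.ne_top (Ideal.eq_top_of_isUnit_mem _ hxM ⟨v, hv⟩)
end
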